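/- arXiv:1910.07750 — 7 statements merged into one kernel-verified Lean document; each statement's English description precedes it below -/
import Mathlib

section
/- A partial applicative structure A is combinatory complete (i.e., a partial combinatory algebra) if and only if there exist elements k and s in A such that for all a, b, c in A: k·a is defined and (k·a)·b = a, s·a and (s·a)·b are defined, and ((s·a)·b)·c ≃ (a·c)·(b·c). -/
/-- Terms over a partial applicative structure: constants from `A`,
variables (indexed by naturals), and application. -/
inductive PTerm (A : Type) where
  | const : A → PTerm A
  | var : ℕ → PTerm A
  | app : PTerm A → PTerm A → PTerm A

/-- Strict evaluation of a term under a valuation `ρ` of the variables. -/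
def PTerm.eval {A : Type} (appl : A → A → Part A) (ρ : ℕ → A) : PTerm A → Part A
  | .const a => Part.some a
  | .var i => Part.some (ρ i)
  | .app t s =>
      (t.eval appl ρ).bind fun a => (s.eval appl ρ).bind fun b => appl a b

/-- All variables of the term are `< n`. -/
def PTerm.varsLt {A : Type} : PTerm A → ℕ → Prop
  | .const _, _ => True
  | .var i, n => i < n
  | .app t s, n => t.varsLt n ∧ s.varsLt n

/-- Iterated application `b·a₁·…·aₙ` (strict). -/
def appSeq {A : Type} (appl : A → A → Part A) (x : Part A) (l : List A) : Part A :=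
  l.foldl (fun p a => p.bind fun u => appl u a) x

/-- A pas is combinatory complete if for every term `t(x₁,…,xₙ,x)` there is
`b` such that `b·a₁·…·aₙ` is defined and `b·a₁·…·aₙ·a ≃ t(a₁,…,aₙ,a)`. -/
def CombComplete {A : Type} (appl : A → A → Part A) : Prop :=
  ∀ (t : PTerm A) (n : ℕ), t.varsLt (n + 1) →
    ∃ b : A, ∀ ρ : ℕ → A,
      (appSeq appl (Part.some b) ((List.range n).map ρ)).Dom ∧
      appSeq appl (Part.some b) ((List.range (n + 1)).map ρ) = t.eval appl ρ

namespace Feferman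

variable {A : Type}

/-- Bracket abstraction of variable `m`. -/
def absT (k s : A) (m : ℕ) : PTerm A → PTerm A
  | .const a => .app (.const k) (.const a)
  | .var i => if i = m then .app (.app (.const s) (.const k)) (.const k)
      else .app (.const k) (.var i)
  | .app t u => .app (.app (.const s) (absT k s m t)) (absT k s m u)

theorem absT_varsLt {k s : A} {m : ℕ} {t : PTerm A} (h : t.varsLt (m + 1)) :
    (absT k s m t).varsLt m := by
  induction t with
  | const a => exact ⟨trivial, trivial⟩
  | var i =>
      by_cases hi : i = m
      · simp [absT, hi, PTerm.varsLt]
      · simp only [absT, hi, if_false]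
        exact ⟨trivial, by simp only [PTerm.varsLt] at h ⊢; omega⟩
  | app t u iht ihu => exact ⟨⟨trivial, iht h.1⟩, ihu h.2⟩

variable {appl : A → A → Part A} {k s : A}

theorem appSeq_snoc (x : Part A) (l : List A) (a : A) :
    appSeq appl x (l ++ [a]) = (appSeq appl x l).bind fun u => appl u a := by
  simp [appSeq, List.foldl_append]

theorem appSeq_dom_head {x : Part A} {l : List A} (h : (appSeq appl x l).Dom) : x.Dom := by
  induction l generalizing x with
  | nil => exact h
  | cons a l ih =>
      have h' : ((x.bind fun u => appl u a)).Dom := ih h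
      obtain ⟨b, hb⟩ := Part.dom_iff_mem.mp h'
      obtain ⟨c, hc, -⟩ := Part.mem_bind_iff.mp hb
      exact Part.dom_iff_mem.mpr ⟨c, hc⟩

section KS
variable (hk1 : ∀ a : A, (appl k a).Dom)
  (hk2 : ∀ a b : A, (appl k a).bind (fun u => appl u b) = Part.some a)
  (hs2 : ∀ a b : A, ((appl s a).bind fun u => appl u b).Dom)
  (hs3 : ∀ a b c : A,
    (((appl s a).bind fun u => appl u b).bind fun u => appl u c) =
      (appl a c).bind fun u => (appl b c).bind fun v => appl u v)

include hk1 hs2 in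
theorem absT_dom (m : ℕ) (t : PTerm A) (ρ : ℕ → A) :
    ((absT k s m t).eval appl ρ).Dom := by
  induction t with
  | const a => simpa [absT, PTerm.eval] using hk1 a
  | var i =>
      by_cases hi : i = m
      · simpa [absT, hi, PTerm.eval] using hs2 k k
      · simpa [absT, hi, PTerm.eval] using hk1 (ρ i)
  | app t u iht ihu =>
      obtain ⟨p, hp⟩ := Part.dom_iff_mem.mp iht
      obtain ⟨q, hq⟩ := Part.dom_iff_mem.mp ihu
      have hp' := (Part.eq_some_iff.mpr hp)
      have hq' := (Part.eq_some_iff.mpr hq)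
      simpa [absT, PTerm.eval, hp', hq'] using hs2 p q

include hk1 hk2 hs2 hs3 in
theorem absT_beta (m : ℕ) (t : PTerm A) (ρ : ℕ → A) (a : A) :
    ((absT k s m t).eval appl ρ).bind (fun u => appl u a) =
      t.eval appl (Function.update ρ m a) := by
  induction t with
  | const c => simpa [absT, PTerm.eval] using hk2 c a
  | var i =>
      by_cases hi : i = m
      · subst hi
        obtain ⟨u₀, hu₀⟩ := Part.dom_iff_mem.mp (hk1 a)
        have hu₀' := Part.eq_some_iff.mpr hu₀
        have h1 : (((appl s k).bind fun u => appl u k).bind fun u => appl u a) =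
            Part.some a := by
          rw [hs3, hu₀']
          simpa [hu₀'] using hk2 a u₀
        simpa [absT, PTerm.eval] using h1
      · simp [absT, hi, PTerm.eval, hk2, Function.update_of_ne hi]
  | app t u iht ihu =>
      obtain ⟨p, hp⟩ := Part.dom_iff_mem.mp (absT_dom hk1 hs2 m t ρ)
      obtain ⟨q, hq⟩ := Part.dom_iff_mem.mp (absT_dom hk1 hs2 m u ρ)
      have hp' := Part.eq_some_iff.mpr hp
      have hq' := Part.eq_some_iff.mpr hq
      rw [hp'] at iht; rw [hq'] at ihu
      simp only [Part.bind_some] at iht ihu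
      simp only [absT, PTerm.eval, hp', hq', Part.bind_some]
      rw [hs3, iht, ihu]

end KS

/-- `lamT n t = ⟨x₀⟩⟨x₁⟩…⟨xₙ⟩ t`. -/
def lamT (k s : A) : ℕ → PTerm A → PTerm A
  | 0, t => absT k s 0 t
  | n + 1, t => lamT k s n (absT k s (n + 1) t)

theorem lamT_varsLt {k s : A} {n : ℕ} {t : PTerm A} (h : t.varsLt (n + 1)) :
    (lamT k s n t).varsLt 0 := by
  induction n generalizing t with
  | zero => exact absT_varsLt h
  | succ n ih => exact ih (absT_varsLt (m := n + 1) h)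

theorem eval_congr {ρ ρ' : ℕ → A} {n : ℕ} :
    ∀ {t : PTerm A}, t.varsLt n → (∀ i < n, ρ i = ρ' i) →
      t.eval appl ρ = t.eval appl ρ'
  | .const a, _, _ => rfl
  | .var i, h, hρ => by simp [PTerm.eval, hρ i h]
  | .app t u, h, hρ => by
      simp only [PTerm.eval, eval_congr h.1 hρ, eval_congr h.2 hρ]

section KS2
variable (hk1 : ∀ a : A, (appl k a).Dom)
  (hk2 : ∀ a b : A, (appl k a).bind (fun u => appl u b) = Part.some a)
  (hs2 : ∀ a b : A, ((appl s a).bind fun u => appl u b).Dom)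
  (hs3 : ∀ a b c : A,
    (((appl s a).bind fun u => appl u b).bind fun u => appl u c) =
      (appl a c).bind fun u => (appl b c).bind fun v => appl u v)

include hk1 hk2 hs2 hs3 in
theorem lamT_spec : ∀ (n : ℕ) (t : PTerm A), t.varsLt (n + 1) → ∀ ρ : ℕ → A,
    (appSeq appl ((lamT k s n t).eval appl ρ) ((List.range n).map ρ)).Dom ∧
    appSeq appl ((lamT k s n t).eval appl ρ) ((List.range (n + 1)).map ρ) =
      t.eval appl ρ := by
  intro n
  induction n with
  | zero =>
      intro t h ρ
      constructor
      · exact absT_dom hk1 hs2 0 t ρ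
      · show appSeq appl _ [ρ 0] = _
        show (((lamT k s 0 t).eval appl ρ).bind fun u => appl u (ρ 0)) = _
        rw [lamT, absT_beta hk1 hk2 hs2 hs3, Function.update_eq_self]
  | succ n ih =>
      intro t h ρ
      have h' : (absT k s (n + 1) t).varsLt (n + 1) := absT_varsLt h
      obtain ⟨hd, he⟩ := ih (absT k s (n + 1) t) h' ρ
      have hlam : lamT k s (n + 1) t = lamT k s n (absT k s (n + 1) t) := rfl
      constructor
      · rw [hlam, he]
        exact absT_dom hk1 hs2 (n + 1) t ρ
      · rw [hlam]
        have : (List.range (n + 2)).map ρ = (List.range (n + 1)).map ρ ++ [ρ (n + 1)] := by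
          rw [List.range_succ, List.map_append]; rfl
        rw [this, appSeq_snoc, he, absT_beta hk1 hk2 hs2 hs3, Function.update_eq_self]

end KS2

end Feferman

open Feferman

/-- **Feferman's theorem**: a pas is combinatory complete (i.e. a pca) iff it
has elements `k` and `s` with: `k·a` defined, `(k·a)·b = a`, `s·a` and
`(s·a)·b` defined, and `((s·a)·b)·c ≃ (a·c)·(b·c)`. -/
theorem combComplete_iff_exists_k_s {A : Type} (appl : A → A → Part A) :
    CombComplete appl ↔
      ∃ k s : A,
        (∀ a : A, (appl k a).Dom) ∧
        (∀ a b : A, (appl k a).bind (fun u => appl u b) = Part.some a) ∧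
        (∀ a : A, (appl s a).Dom) ∧
        (∀ a b : A, ((appl s a).bind fun u => appl u b).Dom) ∧
        (∀ a b c : A,
          (((appl s a).bind fun u => appl u b).bind fun u => appl u c) =
            (appl a c).bind fun u => (appl b c).bind fun v => appl u v) := by
  constructor
  · intro hc
    obtain ⟨k, hk⟩ := hc (.var 0) 1 (by norm_num [PTerm.varsLt])
    obtain ⟨s, hs⟩ := hc (.app (.app (.var 0) (.var 2)) (.app (.var 1) (.var 2))) 2
      (by norm_num [PTerm.varsLt])
    refine ⟨k, s, ?_, ?_, ?_, ?_, ?_⟩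
    · intro a
      have := (hk (fun _ => a)).1
      simpa [appSeq, List.range_succ] using this
    · intro a b
      have := (hk (fun i => if i = 0 then a else b)).2
      simpa [appSeq, List.range_succ, PTerm.eval] using this
    · intro a
      have := (hs (fun _ => a)).1
      simp only [appSeq, List.range_succ] at this
      have := appSeq_dom_head (x := (Part.some s).bind fun u => appl u a)
        (l := [a]) (by simpa [appSeq] using this)
      simpa using this
    · intro a b
      have := (hs (fun i => if i = 0 then a else b)).1
      simpa [appSeq, List.range_succ] using this
    · intro a b c
      have := (hs (fun i => if i = 0 then a else if i = 1 then b else c)).2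
      simpa [appSeq, List.range_succ, PTerm.eval] using this
  · rintro ⟨k, s, hk1, hk2, _hs1, hs2, hs3⟩
    intro t n h
    have hcl : (lamT k s n t).varsLt 0 := lamT_varsLt h
    have hρ₀ := lamT_spec hk1 hk2 hs2 hs3 n t h (fun _ => k)
    have hdom : ((lamT k s n t).eval appl (fun _ => k)).Dom :=
      appSeq_dom_head hρ₀.1
    refine ⟨((lamT k s n t).eval appl (fun _ => k)).get hdom, fun ρ => ?_⟩
    have heq : (lamT k s n t).eval appl ρ =
        Part.some (((lamT k s n t).eval appl (fun _ => k)).get hdom) := by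
      rw [eval_congr hcl (fun i hi => absurd hi (Nat.not_lt_zero i)), Part.some_get]
    obtain ⟨hd, he⟩ := lamT_spec hk1 hk2 hs2 hs3 n t h ρ
    rw [heq] at hd he
    exact ⟨hd, he⟩
end

section
/- Let A be a pca and define a ∼_e b iff a·x ≃ b·x for all x ∈ A. Then the quotient numbering γ_e : A → A/∼_e is precomplete: for every b ∈ A there exists a total element f ∈ A such that for all a ∈ A, if b·a is defined then f·a ∼_e b·a. -/
/-!
Take `f·a` to be the combinator `λ*x. (b·a)·x = s·(s·(k·b)·(k·a))·i`. Being a partial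
application of `s`, it is defined for every `a`, and applied to `x` it computes `(b·a)·x`,
so it is `∼ₑ`-equivalent to `b·a` whenever `b·a` is defined. The map `a ↦ λ*x. (b·a)·x`
is in turn represented by an element `f`, obtained by abstracting over `a` with `s` and `k`.
-/

/-- A partial combinatory algebra: a partial binary application together with
combinators `k` and `s` satisfying the usual laws. -/
structure PCA (A : Type) where
  app : A → A → Part A
  k : A
  s : A
  k_def : ∀ a : A, (app k a).Dom
  k_eq : ∀ a b : A, (app k a).bind (fun u => app u b) = Part.some a
  s_def : ∀ a : A, (app s a).Dom
  s_def2 : ∀ a b : A, ((app s a).bind fun u => app u b).Dom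
  s_eq : ∀ a b c : A,
    (((app s a).bind fun u => app u b).bind fun u => app u c) =
      (app a c).bind fun u => (app b c).bind fun v => app u v

/-- Extension of a relation on `A` to partial values: either both are
undefined, or both are defined with related values. -/
def PartRel {A : Type} (r : A → A → Prop) (x y : Part A) : Prop :=
  (¬ x.Dom ∧ ¬ y.Dom) ∨ (∃ a ∈ x, ∃ b ∈ y, r a b)

/-- The equivalence `a ∼ₑ b` iff `a·x ≃ b·x` for all `x`. -/
def simEq {A : Type} (P : PCA A) (a b : A) : Prop :=
  ∀ x : A, P.app a x = P.app b x

namespace PCA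

variable {A : Type} (P : PCA A)

def k₁ (a : A) : A := (P.app P.k a).get (P.k_def a)

def s₁ (a : A) : A := (P.app P.s a).get (P.s_def a)

def s₂ (a b : A) : A := ((P.app P.s a).bind fun u => P.app u b).get (P.s_def2 a b)

def i : A := P.s₂ P.k P.k

theorem app_k (a : A) : P.app P.k a = Part.some (P.k₁ a) := (Part.some_get _).symm

theorem app_k₁ (a b : A) : P.app (P.k₁ a) b = Part.some a := by
  simpa only [app_k, Part.bind_some] using P.k_eq a b

theorem app_s (a : A) : P.app P.s a = Part.some (P.s₁ a) := (Part.some_get _).symm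

theorem app_s₁ (a b : A) : P.app (P.s₁ a) b = Part.some (P.s₂ a b) := by
  have h : ((P.app P.s a).bind fun u => P.app u b) = Part.some (P.s₂ a b) :=
    (Part.some_get _).symm
  rwa [app_s, Part.bind_some] at h

theorem app_s₂ (a b c : A) :
    P.app (P.s₂ a b) c = (P.app a c).bind fun u => (P.app b c).bind fun v => P.app u v := by
  simpa only [app_s, app_s₁, Part.bind_some] using P.s_eq a b c

theorem app_i (a : A) : P.app P.i a = Part.some a := by
  simp only [i, app_s₂, app_k, app_k₁, Part.bind_some]

/-- The combinator `λ*x. (b·a)·x`. -/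
def delay (b a : A) : A := P.s₂ (P.s₂ (P.k₁ b) (P.k₁ a)) P.i

theorem app_delay (b a x : A) :
    P.app (P.delay b a) x = (P.app b a).bind fun u => P.app u x := by
  simp only [delay, app_s₂, app_k₁, app_i, Part.bind_some]

theorem simEq_delay {b a v : A} (hv : v ∈ P.app b a) : simEq P (P.delay b a) v := by
  intro x
  rw [app_delay, Part.eq_some_iff.mpr hv, Part.bind_some]

/-- `λ*a. λ*x. (b·a)·x`, by bracket abstraction of `delay b a` over `a`. -/
def delayAbs (b : A) : A :=
  P.s₂ (P.s₂ (P.k₁ P.s) (P.s₂ (P.s₂ (P.k₁ P.s) (P.k₁ (P.k₁ b))) P.k)) (P.k₁ P.i)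

theorem app_delayAbs (b a : A) : P.app (P.delayAbs b) a = Part.some (P.delay b a) := by
  simp only [delayAbs, delay, app_s₂, app_k₁, app_k, app_s, app_s₁, Part.bind_some]

end PCA

/-- The quotient numbering `γₑ : A → A/∼ₑ` is precomplete: for every `b`
there is a total `f` such that `f·a ∼ₑ b·a` whenever `b·a` is defined. -/
theorem gammaE_precomplete {A : Type} (P : PCA A) :
    ∀ b : A, ∃ f : A, (∀ a : A, (P.app f a).Dom) ∧
      ∀ a : A, (P.app b a).Dom →
        ∃ u ∈ P.app f a, ∃ v ∈ P.app b a, simEq P u v := by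
  intro b
  refine ⟨P.delayAbs b, fun a => by simp only [PCA.app_delayAbs, Part.some_dom], fun a ha => ?_⟩
  obtain ⟨v, hv⟩ := Part.dom_iff_mem.mp ha
  exact ⟨P.delay b a, by rw [PCA.app_delayAbs]; exact Part.mem_some _, v, hv, P.simEq_delay hv⟩
end

section
/- Kleene's first model K₁ with the equivalence ∼_e (where n ∼_e m iff φ_n(x) ≃ φ_m(x) for all x) is ∼_e-extensional but not strongly ∼_e-extensional: there exist f, g ∈ ℕ such that f·x ∼_e g·x (in the extended sense) for all x, yet f ≁_e g. -/
/-- Application in Kleene's first model `K₁`: `n·m = φₙ(m)`. -/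
def K1 (n m : ℕ) : Part ℕ := (Denumerable.ofNat Nat.Partrec.Code n).eval m

/-- The equivalence `n ∼ₑ m` iff `φₙ(x) ≃ φₘ(x)` for all `x`. -/
def simEqK (n m : ℕ) : Prop := ∀ x : ℕ, K1 n x = K1 m x

lemma K1_encode (c : Nat.Partrec.Code) (x : ℕ) :
    K1 (Encodable.encode c) x = c.eval x := by
  simp [K1]

/-- `K₁` with `∼ₑ` is `∼ₑ`-extensional but not strongly `∼ₑ`-extensional. -/
theorem K1_ext_not_strong_ext :
    (∀ f g : ℕ, (∀ x : ℕ, K1 f x = K1 g x) → simEqK f g) ∧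
    (∃ f g : ℕ, (∀ x : ℕ, PartRel simEqK (K1 f x) (K1 g x)) ∧ ¬ simEqK f g) := by
  constructor
  · exact fun f g h => h
  · set a := Encodable.encode Nat.Partrec.Code.zero with ha
    set b := Encodable.encode (Nat.Partrec.Code.zero.comp Nat.Partrec.Code.zero) with hb
    refine ⟨Encodable.encode (Nat.Partrec.Code.const a),
            Encodable.encode (Nat.Partrec.Code.const b), ?_, ?_⟩
    · intro x
      right
      refine ⟨a, ?_, b, ?_, ?_⟩
      · simp [K1_encode, Nat.Partrec.Code.eval_const, Part.mem_some_iff]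
      · simp [K1_encode, Nat.Partrec.Code.eval_const, Part.mem_some_iff]
      · intro y
        rw [ha, hb, K1_encode, K1_encode]
        simp only [Nat.Partrec.Code.eval]
        exact Part.ext fun z => by simp [Part.bind_eq_bind, Part.mem_bind_iff, Pure.pure, PFun.pure, Part.mem_some_iff]; change z = 0 ↔ z ∈ Part.bind (Part.some 0) (fun _ => Part.some 0); simp
    · intro h
      have := h 0
      rw [K1_encode, K1_encode, Nat.Partrec.Code.eval_const, Nat.Partrec.Code.eval_const] at this
      have hab : a = b := Part.some_inj.mp this
      rw [ha, hb] at hab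
      exact absurd (Encodable.encode_injective hab) (by simp)
end

section
/- Let A be a pca and ∼ an equivalence relation on A. Then ∼ is algebraic (a congruence for application) if and only if A is left-algebraic, i.e., for all f, g ∈ A, f ∼ g implies z·f ∼ z·g (in the extended sense) for all z ∈ A. -/
theorem PartRel.trans {A : Type} {r : A → A → Prop}
    (htrans : ∀ {a b c : A}, r a b → r b c → r a c) {x y z : Part A}
    (hxy : PartRel r x y) (hyz : PartRel r y z) : PartRel r x z := by
  rcases hxy with ⟨hx, hy⟩ | ⟨a, ha, b, hb, hab⟩
  · rcases hyz with ⟨-, hz⟩ | ⟨b, hb, -⟩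
    · exact Or.inl ⟨hx, hz⟩
    · exact absurd hb.fst hy
  · rcases hyz with ⟨hy, -⟩ | ⟨b', hb', c, hc, hbc⟩
    · exact absurd hb.fst hy
    · exact Or.inr ⟨a, ha, c, hc, htrans hab (Part.mem_unique hb' hb ▸ hbc)⟩

namespace PCA

variable {A : Type} (P : PCA A)

def const (x : A) : A := (P.app P.k x).get (P.k_def x)

def sApp (x y : A) : A := ((P.app P.s x).bind fun u => P.app u y).get (P.s_def2 x y)

def id : A := P.sApp P.k P.k

def applyTo (b : A) : A := P.sApp P.id (P.const b)

theorem app_const (x y : A) : P.app (P.const x) y = Part.some x := by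
  simpa only [const, (P.k_def x).bind] using P.k_eq x y

theorem app_sApp (x y z : A) :
    P.app (P.sApp x y) z = (P.app x z).bind fun u => (P.app y z).bind fun v => P.app u v := by
  simpa only [sApp, (P.s_def2 x y).bind] using P.s_eq x y z

theorem app_id (x : A) : P.app P.id x = Part.some x := by
  rw [id, app_sApp, (P.k_def x).bind, (P.k_def x).bind]
  exact P.app_const x _

theorem app_applyTo (a b : A) : P.app (P.applyTo b) a = P.app a b := by
  rw [applyTo, app_sApp, app_id, Part.bind_some, app_const, Part.bind_some]

end PCA

/-- `∼` is algebraic (a congruence for application) iff `A` is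
left-algebraic: `f ∼ g` implies `z·f ∼ z·g` (extended sense) for all `z`. -/
theorem algebraic_iff_left_algebraic {A : Type} (P : PCA A) (r : A → A → Prop)
    (hr : Equivalence r) :
    (∀ a a' b b' : A, r a a' → r b b' →
        PartRel r (P.app a b) (P.app a' b')) ↔
    (∀ f g : A, r f g → ∀ z : A, PartRel r (P.app z f) (P.app z g)) := by
  refine ⟨fun h f g hfg z => h z z f g (hr.refl z) hfg, fun h a a' b b' ha hb => ?_⟩
  -- Congruence on the left is congruence on the right, applied to `applyTo b`.
  have hleft : PartRel r (P.app a b) (P.app a' b) := by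
    simpa only [P.app_applyTo] using h a a' ha (P.applyTo b)
  exact PartRel.trans (r := r) hr.trans hleft (h b b' hb a')
end

section
/- Kleene's first model K₁ with the equivalence ∼_e (n ∼_e m iff φ_n(x) ≃ φ_m(x) for all x) is ∼_e-extensional but not ∼_e-algebraic: ∼_e is not a congruence for application, since there exist n, m, m' ∈ ℕ with m ∼_e m' but n·m ≁_e n·m' (in the extended sense). -/
open Nat.Partrec (Code)
open Nat.Partrec.Code Encodable

@[simp]
theorem K1_encode_s9 (c : Code) (m : ℕ) : K1 (encode c) m = c.eval m := by
  simp [K1]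

theorem partRel_some_iff {A : Type} {r : A → A → Prop} {a b : A} :
    PartRel r (Part.some a) (Part.some b) ↔ r a b := by
  simp [PartRel]

theorem exists_code_eval_eq_encode_const :
    ∃ c : Code, ∀ x, c.eval x = Part.some (encode (Code.const x)) := by
  have hcomp : Computable fun x : ℕ => encode (Code.const x) :=
    (Primrec.encode.comp primrec_const).to_comp
  obtain ⟨c, hc⟩ := exists_code.1 (Partrec.nat_iff.1 hcomp.partrec)
  exact ⟨c, fun x => by rw [hc]; rfl⟩

theorem eq_of_simEqK_encode_const {a b : ℕ}
    (h : simEqK (encode (Code.const a)) (encode (Code.const b))) : a = b := by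
  simpa using h 0

theorem simEqK_zero_zero_comp_zero :
    simEqK (encode Code.zero) (encode (Code.zero.comp Code.zero)) :=
  fun x => by
    rw [K1_encode_s9, K1_encode_s9]
    show Part.some 0 = (Part.some 0).bind fun _ => Part.some 0
    simp

theorem encode_zero_ne_encode_zero_comp_zero :
    encode Code.zero ≠ encode (Code.zero.comp Code.zero) :=
  encode_injective.ne (by simp)

/-- `K₁` is `∼ₑ`-extensional but `∼ₑ` is not algebraic: there are `n, m, m'`
with `m ∼ₑ m'` but `n·m ≁ₑ n·m'` (extended sense). -/
theorem K1_ext_not_algebraic :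
    (∀ f g : ℕ, (∀ x : ℕ, K1 f x = K1 g x) → simEqK f g) ∧
    (∃ n m m' : ℕ, simEqK m m' ∧ ¬ PartRel simEqK (K1 n m) (K1 n m')) := by
  refine ⟨fun f g h => h, ?_⟩
  obtain ⟨c, hc⟩ := exists_code_eval_eq_encode_const
  refine ⟨encode c, _, _, simEqK_zero_zero_comp_zero, fun hrel => ?_⟩
  rw [K1_encode_s9, K1_encode_s9, hc, hc, partRel_some_iff] at hrel
  exact encode_zero_ne_encode_zero_comp_zero (eq_of_simEqK_encode_const hrel)
end

section
/- Let f : ℕ → ℕ be a computable function such that the class 𝓛 = {W_{f(n)} : n ∈ ℕ} is infinite, and suppose the inequality relation {(n, m) : W_{f(n)} ≠ W_{f(m)}} is computably enumerable. Then 𝓛 has a 1-1 numbering: there is a computable function g : ℕ → ℕ with {W_{g(n)} : n ∈ ℕ} = 𝓛 and W_{g(n)} ≠ W_{g(m)} whenever n ≠ m. -/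
/-- `W e` is the `e`-th computably enumerable set: the domain of the `e`-th
partial computable function. -/
def W (e : ℕ) : Set ℕ := {x | ((Denumerable.ofNat Nat.Partrec.Code e).eval x).Dom}

namespace OneOneAux

open Nat.Partrec (Code)
open Nat.Partrec.Code

/-- `(x,y)` is confirmed unequal by time `s` (symmetrized). -/
def conf (c : Code) (x y s : ℕ) : Bool :=
  (evaln s c (Encodable.encode ((x, y) : ℕ × ℕ))).isSome ||
  (evaln s c (Encodable.encode ((y, x) : ℕ × ℕ))).isSome

theorem conf_symm (c : Code) (x y s : ℕ) : conf c x y s = conf c y x s :=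
  Bool.or_comm _ _

theorem conf_mono {c : Code} {x y s t : ℕ} (h : s ≤ t) (hc : conf c x y s = true) :
    conf c x y t = true := by
  unfold conf at hc ⊢
  rcases Bool.or_eq_true_iff.1 hc with h1 | h1 <;>
  · rcases Option.isSome_iff_exists.1 h1 with ⟨a, ha⟩
    have := evaln_mono h (by exact ha)
    first
      | exact Bool.or_eq_true_iff.2 (Or.inl (Option.isSome_iff_exists.2 ⟨a, this⟩))
      | exact Bool.or_eq_true_iff.2 (Or.inr (Option.isSome_iff_exists.2 ⟨a, this⟩))

/-- eligibility of candidate `x` at bound `s`, given the current list `L`. -/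
def elig (c : Code) (L : List ℕ) (x s : ℕ) : Bool :=
  (L.all fun i => conf c x i s) &&
  ((List.range (min x L.length)).all fun r => (L.any fun j => r == j) || conf c x r s)

theorem elig_iff {c : Code} {L : List ℕ} {x s : ℕ} :
    elig c L x s = true ↔
      (∀ i ∈ L, conf c x i s = true) ∧
      (∀ r < min x L.length, r ∉ L → conf c x r s = true) := by
  simp only [elig, Bool.and_eq_true, List.all_eq_true, List.any_eq_true, Bool.or_eq_true,
    List.mem_range, beq_iff_eq]
  constructor
  · rintro ⟨h1, h2⟩
    refine ⟨h1, fun r hr hrL => ?_⟩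
    rcases h2 r hr with h | h
    · exact absurd (by obtain ⟨j, hj, rfl⟩ := h; exact hj) hrL
    · exact h
  · rintro ⟨h1, h2⟩
    refine ⟨h1, fun r hr => ?_⟩
    by_cases hrL : r ∈ L
    · exact Or.inl ⟨r, hrL, rfl⟩
    · exact Or.inr (h2 r hr hrL)

theorem elig_mono {c : Code} {L : List ℕ} {x s t : ℕ} (h : s ≤ t)
    (he : elig c L x s = true) : elig c L x t = true := by
  rw [elig_iff] at he ⊢
  exact ⟨fun i hi => conf_mono h (he.1 i hi), fun r hr hrL => conf_mono h (he.2 r hr hrL)⟩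

/-- some candidate `≤ s` is eligible at bound `s`. -/
def fires (c : Code) (L : List ℕ) (s : ℕ) : Bool :=
  (List.range (s + 1)).any fun x => elig c L x s

theorem fires_iff {c : Code} {L : List ℕ} {s : ℕ} :
    fires c L s = true ↔ ∃ x ≤ s, elig c L x s = true := by
  simp only [fires, List.any_eq_true, List.mem_range, Nat.lt_succ_iff]

/-- the search bound actually used at list `L`. -/
noncomputable def sN (c : Code) (L : List ℕ) : ℕ := sInf {s | fires c L s = true}

/-- the chosen candidate for current list `L`. -/
noncomputable def pick (c : Code) (L : List ℕ) : ℕ :=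
  sInf {x | elig c L x (sN c L) = true}

/-- the list of the first `n` chosen indices. -/
noncomputable def FL (c : Code) : ℕ → List ℕ
  | 0 => []
  | n + 1 => FL c n ++ [pick c (FL c n)]

theorem FL_length (c : Code) (n : ℕ) : (FL c n).length = n := by
  induction n with
  | zero => rfl
  | succ n ih => simp [FL, ih]

theorem mem_FL_iff (c : Code) {i n : ℕ} :
    i ∈ FL c n ↔ ∃ k < n, i = pick c (FL c k) := by
  induction n with
  | zero => simp [FL]
  | succ n ih =>
    simp only [FL, List.mem_append, List.mem_singleton, ih]
    constructor
    · rintro (⟨k, hk, rfl⟩ | rfl)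
      · exact ⟨k, Nat.lt_succ_of_lt hk, rfl⟩
      · exact ⟨n, Nat.lt_succ_self n, rfl⟩
    · rintro ⟨k, hk, rfl⟩
      rcases Nat.lt_succ_iff_lt_or_eq.1 hk with h | rfl
      · exact Or.inl ⟨k, h, rfl⟩
      · exact Or.inr rfl

theorem FL_prefix (c : Code) {n m : ℕ} (h : n ≤ m) {i : ℕ} (hi : i ∈ FL c n) : i ∈ FL c m := by
  rw [mem_FL_iff] at hi ⊢
  obtain ⟨k, hk, rfl⟩ := hi
  exact ⟨k, lt_of_lt_of_le hk h, rfl⟩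

section Hyp

variable {f : ℕ → ℕ} {c : Code}
variable (hsound : ∀ {x y s : ℕ}, conf c x y s = true → W (f x) ≠ W (f y))
variable (hcomp : ∀ {x y : ℕ}, W (f x) ≠ W (f y) → ∃ s, conf c x y s = true)
variable (hinf : {S : Set ℕ | ∃ n : ℕ, S = W (f n)}.Infinite)

include hcomp in
/-- a uniform confirmation bound for finitely many true inequalities. -/
theorem exists_uniform {x : ℕ} {l : List ℕ} (h : ∀ i ∈ l, W (f x) ≠ W (f i)) :
    ∃ T, ∀ i ∈ l, conf c x i T = true := by
  induction l with
  | nil => exact ⟨0, by simp⟩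
  | cons a l ih =>
    obtain ⟨T1, hT1⟩ := ih fun i hi => h i (List.mem_cons_of_mem a hi)
    obtain ⟨T2, hT2⟩ := hcomp (h a List.mem_cons_self)
    refine ⟨max T1 T2, fun i hi => ?_⟩
    rcases List.mem_cons.1 hi with rfl | hi
    · exact conf_mono (le_max_right _ _) hT2
    · exact conf_mono (le_max_left _ _) (hT1 i hi)

include hcomp hinf in
theorem exists_fires (L : List ℕ) : ∃ s, fires c L s = true := by
  -- there is an index whose set is not among the sets of `L`
  have hex : {x : ℕ | W (f x) ∉ (fun i => W (f i)) '' {i | i ∈ L}}.Nonempty := by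
    by_contra hcon
    rw [Set.not_nonempty_iff_eq_empty] at hcon
    have hsub : {S : Set ℕ | ∃ n : ℕ, S = W (f n)} ⊆ (fun i => W (f i)) '' {i | i ∈ L} := by
      rintro S ⟨n, rfl⟩
      by_contra hS
      have : n ∈ {x : ℕ | W (f x) ∉ (fun i => W (f i)) '' {i | i ∈ L}} := hS
      rw [hcon] at this
      exact this
    exact hinf (Set.Finite.subset (Set.Finite.image _ (L.finite_toSet)) hsub)
  set x := sInf {x : ℕ | W (f x) ∉ (fun i => W (f i)) '' {i | i ∈ L}} with hxdef
  have hx : W (f x) ∉ (fun i => W (f i)) '' {i | i ∈ L} := Nat.sInf_mem hex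
  -- all required inequalities for `x` are true
  have h1 : ∀ i ∈ L, W (f x) ≠ W (f i) := fun i hi he => hx ⟨i, hi, he.symm⟩
  have h2 : ∀ r < x, W (f x) ≠ W (f r) := by
    intro r hr
    have : W (f r) ∈ (fun i => W (f i)) '' {i | i ∈ L} := by
      by_contra hcon
      exact absurd hr (not_lt.2 (Nat.sInf_le hcon))
    intro he
    rw [he] at hx
    exact hx this
  obtain ⟨T1, hT1⟩ := exists_uniform (f := f) (c := c) hcomp h1
  obtain ⟨T2, hT2⟩ := exists_uniform (f := f) (c := c) hcomp
    (l := List.range x) (fun r hr => h2 r (List.mem_range.1 hr))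
  refine ⟨max x (max T1 T2), fires_iff.2 ⟨x, le_max_left _ _, elig_iff.2 ⟨?_, ?_⟩⟩⟩
  · exact fun i hi => conf_mono (le_trans (le_max_left _ _) (le_max_right _ _)) (hT1 i hi)
  · intro r hr _
    exact conf_mono (le_trans (le_max_right _ _) (le_max_right _ _))
      (hT2 r (List.mem_range.2 (lt_of_lt_of_le hr (min_le_left _ _))))

include hcomp hinf in
theorem fires_sN (L : List ℕ) : fires c L (sN c L) = true :=
  Nat.sInf_mem (exists_fires hcomp hinf L)

include hcomp hinf in
theorem pick_spec (L : List ℕ) :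
    elig c L (pick c L) (sN c L) = true ∧ pick c L ≤ sN c L := by
  have h := fires_iff.1 (fires_sN hcomp hinf L)
  obtain ⟨x, hxs, hx⟩ := h
  have hne : {x | elig c L x (sN c L) = true}.Nonempty := ⟨x, hx⟩
  constructor
  · exact Nat.sInf_mem hne
  · exact le_trans (Nat.sInf_le hx) hxs

include hsound hcomp hinf in
theorem pick_ne (L : List ℕ) {i : ℕ} (hi : i ∈ L) : W (f (pick c L)) ≠ W (f i) :=
  hsound ((elig_iff.1 (pick_spec hcomp hinf L).1).1 i hi)

include hsound hcomp hinf in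
theorem dist {k n : ℕ} (h : k < n) :
    W (f (pick c (FL c n))) ≠ W (f (pick c (FL c k))) := by
  apply pick_ne hsound hcomp hinf
  exact (mem_FL_iff c).2 ⟨k, h, rfl⟩

include hsound hcomp hinf in
theorem coverage (m0 : ℕ) : ∃ k, W (f m0) = W (f (pick c (FL c k))) := by
  by_contra hcon0
  have hne : {r : ℕ | ∀ k, W (f r) ≠ W (f (pick c (FL c k)))}.Nonempty :=
    ⟨m0, fun k h => hcon0 ⟨k, h⟩⟩
  set m := sInf {r : ℕ | ∀ k, W (f r) ≠ W (f (pick c (FL c k)))} with hmdef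
  have hm : ∀ k, W (f m) ≠ W (f (pick c (FL c k))) := Nat.sInf_mem hne
  have hlt : ∀ r < m, ∃ k, W (f r) = W (f (pick c (FL c k))) := by
    intro r hr
    have h := Nat.notMem_of_lt_sInf (s := {r : ℕ | ∀ k, W (f r) ≠ W (f (pick c (FL c k)))}) hr
    simp only [Set.mem_setOf_eq] at h
    push_neg at h
    exact h
  set K : ℕ → ℕ := fun r => sInf {k | W (f r) = W (f (pick c (FL c k)))} with hKdef
  have hKspec : ∀ r, r < m → W (f r) = W (f (pick c (FL c (K r)))) := by
    intro r hr
    exact Nat.sInf_mem (hlt r hr)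
  set N₁ : ℕ := max (m + 1) ((Finset.range m).sup fun r => K r + 1) with hN₁def
  have hN1m : m < N₁ := lt_of_lt_of_le (Nat.lt_succ_self m) (le_max_left _ _)
  have hN1K : ∀ r, r < m → K r < N₁ := by
    intro r hr
    have h1 : K r + 1 ≤ (Finset.range m).sup fun r => K r + 1 :=
      Finset.le_sup (f := fun r => K r + 1) (Finset.mem_range.2 hr)
    exact lt_of_lt_of_le (Nat.lt_succ_self _) (le_trans h1 (le_max_right _ _))
  have xnotm : ∀ n, pick c (FL c n) ≠ m := by
    intro n h
    exact hm n (by rw [h])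
  have m_not_mem : ∀ n, m ∉ FL c n := by
    intro n hmem
    obtain ⟨k, _, hkm⟩ := (mem_FL_iff c).1 hmem
    exact xnotm k hkm.symm
  have claim1 : ∀ n, N₁ ≤ n → m < pick c (FL c n) := by
    intro n hn
    rcases lt_trichotomy (pick c (FL c n)) m with h | h | h
    · exfalso
      have hKr := hKspec _ h
      have hmem : pick c (FL c (K (pick c (FL c n)))) ∈ FL c n :=
        (mem_FL_iff c).2 ⟨K (pick c (FL c n)), lt_of_lt_of_le (hN1K _ h) hn, rfl⟩
      exact pick_ne hsound hcomp hinf (FL c n) hmem hKr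
    · exact absurd h (xnotm n)
    · exact h
  have hT1 : ∀ i ∈ FL c N₁, W (f m) ≠ W (f i) := by
    intro i hi
    obtain ⟨k, _, rfl⟩ := (mem_FL_iff c).1 hi
    exact hm k
  have hT2' : ∀ r ∈ List.range m, W (f m) ≠ W (f r) := by
    intro r hr he
    exact hm (K r) (he.trans (hKspec r (List.mem_range.1 hr)))
  obtain ⟨Ta, hTa⟩ := exists_uniform (f := f) (c := c) hcomp hT1
  obtain ⟨Tb, hTb⟩ := exists_uniform (f := f) (c := c) hcomp hT2'
  set T := max Ta Tb with hTdef
  set B := max T m with hBdef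
  have claim2 : ∀ n, N₁ ≤ n → ∀ s, T ≤ s → m ≤ s →
      (∀ j, N₁ ≤ j → j < n → sN c (FL c j) ≤ s) → elig c (FL c n) m s = true := by
    intro n hn s hTs hms hj
    rw [elig_iff]
    constructor
    · intro i hi
      obtain ⟨k, hk, rfl⟩ := (mem_FL_iff c).1 hi
      by_cases hkN : k < N₁
      · have hmem : pick c (FL c k) ∈ FL c N₁ := (mem_FL_iff c).2 ⟨k, hkN, rfl⟩
        exact conf_mono (le_trans (le_max_left _ _) hTs) (hTa _ hmem)
      · push_neg at hkN
        have hel := (pick_spec hcomp hinf (FL c k)).1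
        have h2 := (elig_iff.1 hel).2
        have hmlt : m < min (pick c (FL c k)) (FL c k).length := by
          rw [FL_length]
          exact lt_min (claim1 k hkN) (lt_of_lt_of_le hN1m hkN)
        have hcf := h2 m hmlt (m_not_mem k)
        rw [conf_symm] at hcf
        exact conf_mono (hj k hkN hk) hcf
    · intro r hrmin _
      have hrm : r < m := lt_of_lt_of_le hrmin (min_le_left _ _)
      exact conf_mono (le_trans (le_max_right _ _) hTs) (hTb r (List.mem_range.2 hrm))
  have claim3 : ∀ n, N₁ ≤ n → sN c (FL c n) ≤ B := by
    intro n
    induction n using Nat.strong_induction_on with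
    | _ n ih =>
      intro hn
      have hel := claim2 n hn B (le_max_left _ _) (le_max_right _ _)
        (fun j hj1 hj2 => ih j hj2 hj1)
      have hfire : fires c (FL c n) B = true :=
        fires_iff.2 ⟨m, le_max_right _ _, hel⟩
      exact Nat.sInf_le hfire
  have hmaps : ∀ n ∈ Finset.Icc N₁ (N₁ + B + 1), pick c (FL c n) ∈ Finset.range (B + 1) := by
    intro n hn
    have hn1 : N₁ ≤ n := (Finset.mem_Icc.1 hn).1
    have hle := le_trans (pick_spec hcomp hinf (FL c n)).2 (claim3 n hn1)
    exact Finset.mem_range.2 (Nat.lt_succ_of_le hle)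
  have hinj : Set.InjOn (fun n => pick c (FL c n)) ↑(Finset.Icc N₁ (N₁ + B + 1)) := by
    intro a _ b _ h
    by_contra hab
    rcases lt_or_gt_of_ne hab with h' | h'
    · exact dist hsound hcomp hinf h' (by simp only [h])
    · exact dist hsound hcomp hinf h' (by simp only [h])
  have hcard := Finset.card_le_card_of_injOn _ hmaps hinj
  rw [Nat.card_Icc, Finset.card_range] at hcard
  omega

end Hyp

theorem primrec_list_all {α β : Type*} [Primcodable α] [Primcodable β]
    {f : α → List β} {p : α → β → Bool} (hf : Primrec f) (hp : Primrec₂ p) :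
    Primrec fun a => (f a).all (p a) := by
  have h : Primrec fun a => (f a).foldr (fun b s => p a b && s) true :=
    Primrec.list_foldr hf (Primrec.const true)
      ((Primrec.and.comp (hp.comp Primrec.fst (Primrec.fst.comp Primrec.snd))
        (Primrec.snd.comp Primrec.snd)).to₂)
  refine h.of_eq fun a => ?_
  induction f a with
  | nil => rfl
  | cons b l ih => simp [List.all_cons, ih]

theorem primrec_list_any {α β : Type*} [Primcodable α] [Primcodable β]
    {f : α → List β} {p : α → β → Bool} (hf : Primrec f) (hp : Primrec₂ p) :
    Primrec fun a => (f a).any (p a) := by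
  have h : Primrec fun a => (f a).foldr (fun b s => p a b || s) false :=
    Primrec.list_foldr hf (Primrec.const false)
      ((Primrec.or.comp (hp.comp Primrec.fst (Primrec.fst.comp Primrec.snd))
        (Primrec.snd.comp Primrec.snd)).to₂)
  refine h.of_eq fun a => ?_
  induction f a with
  | nil => rfl
  | cons b l ih => simp [List.any_cons, ih]

theorem primrec_conf (c : Code) :
    Primrec fun t : (ℕ × ℕ) × ℕ => conf c t.1.1 t.1.2 t.2 := by
  have h1 : Primrec fun t : (ℕ × ℕ) × ℕ =>
      (evaln t.2 c (Encodable.encode ((t.1.1, t.1.2) : ℕ × ℕ))).isSome :=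
    Primrec.option_isSome.comp
      (primrec_evaln.comp (Primrec.pair (Primrec.pair Primrec.snd (Primrec.const c))
        (Primrec.encode.comp
          (Primrec.pair (Primrec.fst.comp Primrec.fst) (Primrec.snd.comp Primrec.fst)))))
  have h2 : Primrec fun t : (ℕ × ℕ) × ℕ =>
      (evaln t.2 c (Encodable.encode ((t.1.2, t.1.1) : ℕ × ℕ))).isSome :=
    Primrec.option_isSome.comp
      (primrec_evaln.comp (Primrec.pair (Primrec.pair Primrec.snd (Primrec.const c))
        (Primrec.encode.comp
          (Primrec.pair (Primrec.snd.comp Primrec.fst) (Primrec.fst.comp Primrec.fst)))))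
  exact (Primrec.or.comp h1 h2).of_eq fun t => rfl

theorem primrec_elig (c : Code) :
    Primrec fun q : (List ℕ × ℕ) × ℕ => elig c q.1.1 q.1.2 q.2 := by
  have hA : Primrec fun q : (List ℕ × ℕ) × ℕ => q.1.1.all fun i => conf c q.1.2 i q.2 :=
    primrec_list_all (Primrec.fst.comp Primrec.fst)
      ((primrec_conf c).comp (Primrec.pair
        (Primrec.pair ((Primrec.snd.comp Primrec.fst).comp Primrec.fst) Primrec.snd)
        (Primrec.snd.comp Primrec.fst)))
  have hB : Primrec fun q : (List ℕ × ℕ) × ℕ =>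
      (List.range (min q.1.2 q.1.1.length)).all fun r =>
        (q.1.1.any fun j => r == j) || conf c q.1.2 r q.2 := by
    apply primrec_list_all
    · exact Primrec.list_range.comp (Primrec.nat_min.comp
        (Primrec.snd.comp Primrec.fst)
        (Primrec.list_length.comp (Primrec.fst.comp Primrec.fst)))
    · exact Primrec.or.comp
        (primrec_list_any ((Primrec.fst.comp Primrec.fst).comp Primrec.fst)
          (Primrec.beq.comp (Primrec.snd.comp Primrec.fst) Primrec.snd))
        ((primrec_conf c).comp (Primrec.pair
          (Primrec.pair ((Primrec.snd.comp Primrec.fst).comp Primrec.fst) Primrec.snd)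
          (Primrec.snd.comp Primrec.fst)))
  exact (Primrec.and.comp hA hB).of_eq fun q => rfl

theorem primrec_fires (c : Code) :
    Primrec fun q : List ℕ × ℕ => fires c q.1 q.2 :=
  primrec_list_any (Primrec.list_range.comp (Primrec.succ.comp Primrec.snd))
    ((primrec_elig c).comp (Primrec.pair
      (Primrec.pair (Primrec.fst.comp Primrec.fst) Primrec.snd)
      (Primrec.snd.comp Primrec.fst)))

/-- the partial computable mirror of `pick`. -/
def pickPart (c : Code) (L : List ℕ) : Part ℕ :=
  (Nat.rfind ↑(fun s => fires c L s)).bind fun s =>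
    Nat.rfind ↑(fun x => elig c L x s)

theorem partrec_pickPart (c : Code) : Partrec (pickPart c) := by
  have h1 : Partrec fun L : List ℕ => Nat.rfind ↑(fun s => fires c L s) :=
    Partrec.rfind (Computable₂.partrec₂ (Primrec₂.to_comp (primrec_fires c)))
  have h2 : Partrec fun q : List ℕ × ℕ => Nat.rfind ↑(fun x => elig c q.1 x q.2) :=
    Partrec.rfind (Computable₂.partrec₂ (Primrec₂.to_comp ((primrec_elig c).comp (Primrec.pair
        (Primrec.pair (Primrec.fst.comp Primrec.fst) Primrec.snd)
        (Primrec.snd.comp Primrec.fst)))))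
  exact h1.bind h2.to₂

/-- one step of the master recursion. -/
def step (f : ℕ → ℕ) (c : Code) (q : ℕ × List ℕ) : Part (ℕ ⊕ (ℕ × List ℕ)) :=
  (pickPart c q.2).map fun x =>
    if q.1 = 0 then Sum.inl (f x) else Sum.inr (q.1 - 1, q.2 ++ [x])

set_option maxHeartbeats 1000000 in
theorem partrec_step {f : ℕ → ℕ} (hf : Computable f) (c : Code) :
    Partrec (step f c) := by
  have hinl : Computable fun z : (ℕ × List ℕ) × ℕ => (Sum.inl (f z.2) : ℕ ⊕ (ℕ × List ℕ)) :=
    Computable.sumInl.comp (hf.comp Computable.snd)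
  have hinr : Computable fun z : (ℕ × List ℕ) × ℕ =>
      (Sum.inr (z.1.1 - 1, z.1.2 ++ [z.2]) : ℕ ⊕ (ℕ × List ℕ)) :=
    Computable.sumInr.comp (Computable.pair
      (Primrec.pred.to_comp.comp (Computable.fst.comp Computable.fst))
      ((Primrec₂.to_comp Primrec.list_concat).comp
        (Computable.snd.comp Computable.fst) Computable.snd))
  have hcnd : Computable fun z : (ℕ × List ℕ) × ℕ => z.1.1 == 0 :=
    (Primrec.beq.comp (Primrec.fst.comp Primrec.fst) (Primrec.const 0)).to_comp
  have hcomb' : Computable fun z : (ℕ × List ℕ) × ℕ =>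
      if z.1.1 = 0 then (Sum.inl (f z.2) : ℕ ⊕ (ℕ × List ℕ))
      else Sum.inr (z.1.1 - 1, z.1.2 ++ [z.2]) := by
    refine (Computable.cond hcnd hinl hinr).of_eq fun z => ?_
    by_cases h : z.1.1 = 0
    · simp [h]
    · rw [if_neg h, show (z.1.1 == 0) = false from beq_eq_false_iff_ne.2 h, Bool.cond_false]
  exact Partrec.map ((partrec_pickPart c).comp Computable.snd) hcomb'.to₂

section Hyp2

variable {f : ℕ → ℕ} {c : Code}
variable (hcomp : ∀ {x y : ℕ}, W (f x) ≠ W (f y) → ∃ s, conf c x y s = true)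
variable (hinf : {S : Set ℕ | ∃ n : ℕ, S = W (f n)}.Infinite)

include hcomp hinf in
theorem pick_mem (L : List ℕ) : pick c L ∈ pickPart c L := by
  have h1 : sN c L ∈ Nat.rfind ↑(fun s => fires c L s) := by
    rw [Nat.mem_rfind]
    constructor
    · exact Part.mem_some_iff.2 (fires_sN hcomp hinf L).symm
    · intro m' hm'
      have hne : fires c L m' = false := by
        have := Nat.notMem_of_lt_sInf (s := {s | fires c L s = true}) hm'
        simpa using this
      exact Part.mem_some_iff.2 hne.symm
  have h2 : pick c L ∈ Nat.rfind ↑(fun x => elig c L x (sN c L)) := by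
    rw [Nat.mem_rfind]
    constructor
    · exact Part.mem_some_iff.2 (pick_spec hcomp hinf L).1.symm
    · intro m' hm'
      have hne : elig c L m' (sN c L) = false := by
        have := Nat.notMem_of_lt_sInf (s := {x | elig c L x (sN c L) = true}) hm'
        simpa using this
      exact Part.mem_some_iff.2 hne.symm
  exact Part.mem_bind_iff.2 ⟨sN c L, h1, h2⟩

include hcomp hinf in
theorem fix_mem (f₀ : ℕ → ℕ) : ∀ d m : ℕ,
    f₀ (pick c (FL c (m + d))) ∈ PFun.fix (step f₀ c) (d, FL c m) := by
  intro d
  induction d with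
  | zero =>
    intro m
    apply PFun.fix_stop
    show _ ∈ step f₀ c (0, FL c m)
    have hmem := Part.mem_map
      (fun x => if (0 : ℕ) = 0 then (Sum.inl (f₀ x) : ℕ ⊕ (ℕ × List ℕ))
        else Sum.inr (0 - 1, FL c m ++ [x]))
      (pick_mem hcomp hinf (FL c m))
    simpa [step] using hmem
  | succ d ih =>
    intro m
    have hstep : Sum.inr (d, FL c (m + 1)) ∈ step f₀ c (d + 1, FL c m) := by
      have hmem := Part.mem_map
        (fun x => if (d + 1 : ℕ) = 0 then (Sum.inl (f₀ x) : ℕ ⊕ (ℕ × List ℕ))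
          else Sum.inr (d + 1 - 1, FL c m ++ [x]))
        (pick_mem hcomp hinf (FL c m))
      simpa [step, FL] using hmem
    rw [PFun.fix_fwd_eq hstep]
    have := ih (m + 1)
    rwa [show m + 1 + d = m + (d + 1) by omega] at this

include hcomp hinf in
theorem computable_g (hf : Computable f) :
    Computable fun n => f (pick c (FL c n)) := by
  have hfix : Partrec fun n : ℕ => PFun.fix (step f c) (n, ([] : List ℕ)) :=
    (partrec_step hf c).fix.comp (Computable.id.pair (Computable.const []))
  apply hfix.of_eq_tot
  intro n
  have := fix_mem hcomp hinf f n 0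
  simpa [FL] using this

end Hyp2

end OneOneAux

/-- If the inequality relation of an infinite uniformly c.e. class
`𝓛 = {W_{f(n)} : n ∈ ℕ}` is c.e. (i.e. equality is `Π⁰₁`), then `𝓛` has a
1-1 numbering. -/
theorem one_one_numbering_of_re_inequality (f : ℕ → ℕ) (hf : Computable f)
    (hinf : {S : Set ℕ | ∃ n : ℕ, S = W (f n)}.Infinite)
    (hce : REPred (fun p : ℕ × ℕ => W (f p.1) ≠ W (f p.2))) :
    ∃ g : ℕ → ℕ, Computable g ∧
      {S : Set ℕ | ∃ n : ℕ, S = W (g n)} = {S : Set ℕ | ∃ n : ℕ, S = W (f n)} ∧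
      ∀ n m : ℕ, n ≠ m → W (g n) ≠ W (g m) := by
  classical
  -- extract a code for the inequality relation
  have hce' : Nat.Partrec fun n =>
      Part.bind ↑(Encodable.decode (α := ℕ × ℕ) n) fun a : ℕ × ℕ =>
        (Part.assert (W (f a.1) ≠ W (f a.2)) fun _ => Part.some ()).map Encodable.encode := hce
  obtain ⟨c, hc⟩ := Nat.Partrec.Code.exists_code.1 hce'
  have hdom : ∀ a : ℕ × ℕ, (c.eval (Encodable.encode a)).Dom ↔ W (f a.1) ≠ W (f a.2) := by
    intro a
    rw [hc]
    obtain ⟨a1, a2⟩ := a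
    simp [Encodable.encodek, Part.assert, Encodable.encode_prod_val]
  have hdom2 : ∀ n, (c.eval n).Dom ↔ ∃ k, (Nat.Partrec.Code.evaln k c n).isSome := by
    intro n
    constructor
    · intro h
      obtain ⟨x, hx⟩ := Part.dom_iff_mem.1 h
      obtain ⟨k, hk⟩ := Nat.Partrec.Code.evaln_complete.1 hx
      exact ⟨k, Option.isSome_iff_exists.2 ⟨x, hk⟩⟩
    · rintro ⟨k, hk⟩
      obtain ⟨x, hx⟩ := Option.isSome_iff_exists.1 hk
      exact Part.dom_iff_mem.2 ⟨x, Nat.Partrec.Code.evaln_complete.2 ⟨k, hx⟩⟩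
  have hsound : ∀ {x y s : ℕ}, OneOneAux.conf c x y s = true → W (f x) ≠ W (f y) := by
    intro x y s hconf
    rcases Bool.or_eq_true_iff.1 hconf with h | h
    · exact (hdom (x, y)).1 ((hdom2 _).2 ⟨s, h⟩)
    · exact ((hdom (y, x)).1 ((hdom2 _).2 ⟨s, h⟩)).symm
  have hcomp : ∀ {x y : ℕ}, W (f x) ≠ W (f y) → ∃ s, OneOneAux.conf c x y s = true := by
    intro x y hne
    obtain ⟨k, hk⟩ := (hdom2 _).1 ((hdom (x, y)).2 hne)
    exact ⟨k, Bool.or_eq_true_iff.2 (Or.inl hk)⟩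
  refine ⟨fun n => f (OneOneAux.pick c (OneOneAux.FL c n)), ?_, ?_, ?_⟩
  · exact OneOneAux.computable_g hcomp hinf hf
  · ext S
    constructor
    · rintro ⟨n, rfl⟩
      exact ⟨OneOneAux.pick c (OneOneAux.FL c n), rfl⟩
    · rintro ⟨n, rfl⟩
      obtain ⟨k, hk⟩ := OneOneAux.coverage hsound hcomp hinf n
      exact ⟨k, hk⟩
  · intro n m hnm
    rcases lt_or_gt_of_ne hnm with h | h
    · exact (OneOneAux.dist hsound hcomp hinf h).symm
    · exact OneOneAux.dist hsound hcomp hinf h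
end

section
/- No injective numbering of the partial computable functions is precomplete: if γ : ℕ → P is an injective surjection onto the set P of all unary partial computable functions, then there exists a partial computable function ψ : ℕ ⇀ ℕ such that no total computable f : ℕ → ℕ satisfies γ(f(n)) = γ(ψ(n)) for every n with ψ(n) defined. -/
/-!
Under an injective numbering, `γ (f n) = γ (ψ n)` forces `f n = ψ n`, so a precompleteness
witness `f` would be a total computable extension of `ψ`. The diagonal function
`n ↦ φₙ(n) + 1` has none: at an index `e` of such an `f` it is defined and differs from `f e`.
-/

namespace Nat.Partrec.Code

def diagonal (n : ℕ) : Part ℕ :=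
  (eval (Denumerable.ofNat Code n) n).map Nat.succ

theorem partrec_diagonal : Nat.Partrec diagonal :=
  Partrec.nat_iff.mp <|
    (eval_part.comp (Computable.ofNat Code) Computable.id).map
      (Computable.succ.comp Computable.snd).to₂

theorem not_computable_extends_diagonal {f : ℕ → ℕ} (hf : Computable f) :
    ¬ ∀ n, ∀ m ∈ diagonal n, f n = m := by
  intro hext
  obtain ⟨c, hc⟩ := exists_code.mp (Partrec.nat_iff.mp hf.partrec)
  have hdiag : f (Encodable.encode c) + 1 ∈ diagonal (Encodable.encode c) := by
    rw [diagonal, Denumerable.ofNat_encode, hc]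
    exact Part.mem_map Nat.succ (Part.mem_some _)
  exact Nat.succ_ne_self _ (hext _ _ hdiag).symm

end Nat.Partrec.Code

theorem one_one_numbering_not_precomplete_general
    (γ : ℕ → {ψ : ℕ →. ℕ // Nat.Partrec ψ})
    (hinj : Function.Injective γ) :
    ∃ ψ : ℕ →. ℕ, Nat.Partrec ψ ∧
      ∀ f : ℕ → ℕ, Computable f →
        ¬ ∀ n : ℕ, ∀ m ∈ ψ n, γ (f n) = γ m :=
  ⟨Nat.Partrec.Code.diagonal, Nat.Partrec.Code.partrec_diagonal, fun _ hf hprecomplete =>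
    Nat.Partrec.Code.not_computable_extends_diagonal hf fun n m hm => hinj (hprecomplete n m hm)⟩

/-- No injective (1-1) numbering of the partial computable functions is
precomplete: for every injective surjection `γ` from `ℕ` onto the partial
computable functions there is a partial computable `ψ` that is not totalized
modulo `γ` by any total computable function. -/
theorem one_one_numbering_not_precomplete
    (γ : ℕ → {ψ : ℕ →. ℕ // Nat.Partrec ψ})
    (hinj : Function.Injective γ) (hsurj : Function.Surjective γ) :
    ∃ ψ : ℕ →. ℕ, Nat.Partrec ψ ∧
      ∀ f : ℕ → ℕ, Computable f →
        ¬ ∀ n : ℕ, ∀ m ∈ ψ n, γ (f n) = γ m :=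
  one_one_numbering_not_precomplete_general γ hinj
end
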